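/- With R1, R2, Θ independent, R1 ~ μ_{λ1,c1}, R2 ~ μ_{λ2,c2}, Θ uniform on (0, π), and ρ = √(R1² + R2² − 2·R1·R2·cos Θ), for every r with 0 < r ≤ c2·t the joint probability P(ρ < r, R1 < c1·t, R2 = c2·t) equals (λ1·e^{−(λ1+λ2)t}/(π·c1)) · ∫_{c2t−r}^{β(r)} arccos((ξ² + (c2t)² − r²)/(2·c2t·ξ)) · ξ·(c1²t² − ξ²)^{−1/2} · exp((λ1/c1)·√(c1²t² − ξ²)) dξ, where β(r) = min{c2t + r, c1t}. -/

import Mathlib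

open MeasureTheory ProbabilityTheory

/-- Density of the absolutely continuous part of the law of the distance from
the origin of a planar Markov random flight with speed `c` and rate `lam` at time `t`. -/
noncomputable def fac (t lam c z : ℝ) : ℝ :=
  if 0 < z ∧ z < c * t then
    (lam / c) * z / Real.sqrt (c ^ 2 * t ^ 2 - z ^ 2) *
      Real.exp (-(lam * t) + (lam / c) * Real.sqrt (c ^ 2 * t ^ 2 - z ^ 2))
  else 0

/-- The law of the distance from the origin of a planar Markov random flight:
singular part `e^{-λt}·δ_{ct}` plus absolutely continuous part with density `fac`. -/
noncomputable def flightLaw (t lam c : ℝ) : Measure ℝ :=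
  ENNReal.ofReal (Real.exp (-(lam * t))) • Measure.dirac (c * t) +
    volume.withDensity fun z => ENNReal.ofReal (fac t lam c z)

/-- The uniform probability measure on a set `s ⊆ ℝ`. -/
noncomputable def uniformMeasure (s : Set ℝ) : Measure ℝ :=
  (volume s)⁻¹ • volume.restrict s

/-- The Euclidean distance between the two flights, expressed through the radii
`R1, R2` and the angle `Θ` via the law of cosines. -/
noncomputable def rho {Ω : Type*} (R1 R2 Θ : Ω → ℝ) (ω : Ω) : ℝ :=
  Real.sqrt (R1 ω ^ 2 + R2 ω ^ 2 - 2 * R1 ω * R2 ω * Real.cos (Θ ω))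


/-!
Conditioning on `R2 = c2 t` (probability `e^{-λ2 t}`, independent of `(R1, Θ)`), the event becomes
`√(R1² + a² − 2 a R1 cos Θ) < r` with `a = c2 t`. For fixed `R1 = ξ > 0` the law of cosines turns
this into `cos Θ > (ξ² + a² − r²)/(2aξ)`, which has probability `arccos(…)/π` for `Θ` uniform
on `(0, π)`; it vanishes unless `|ξ − a| < r`. Integrating against the density of the absolutely
continuous part of the law of `R1` (the atom at `c1 t` is excluded by `R1 < c1 t`) gives the
formula.
-/

open Real Set

lemma setOf_lt_cos_inter_Ioo_eq_Ioo_arccos (u : ℝ) :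
    {θ : ℝ | u < cos θ} ∩ Ioo 0 π = Ioo 0 (arccos u) := by
  ext θ
  simp only [mem_inter_iff, mem_ofPred_eq, mem_Ioo]
  constructor
  · rintro ⟨hu, h0, hπ⟩
    refine ⟨h0, ?_⟩
    rcases le_or_gt (-1) u with h1 | h1
    · have := strictAntiOn_arccos ⟨h1, hu.le.trans (cos_le_one θ)⟩
        ⟨neg_one_le_cos θ, cos_le_one θ⟩ hu
      rwa [arccos_cos h0.le hπ.le] at this
    · rwa [arccos_eq_pi.mpr h1.le]
  · rintro ⟨h0, hθ⟩
    have hθπ : θ < π := hθ.trans_le (arccos_le_pi u)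
    refine ⟨?_, h0, hθπ⟩
    rcases lt_or_ge 1 u with h1 | h1
    · rw [arccos_eq_zero.mpr h1.le] at hθ
      exact absurd h0 hθ.not_gt
    rcases lt_or_ge u (-1) with h2 | h2
    · have := strictAntiOn_cos ⟨h0.le, hθπ.le⟩ ⟨pi_pos.le, le_rfl⟩ hθπ
      rw [cos_pi] at this
      linarith
    · have := strictAntiOn_cos ⟨h0.le, hθπ.le⟩ ⟨arccos_nonneg u, arccos_le_pi u⟩ hθ
      rwa [cos_arccos h2 h1] at this

instance sFinite_uniformMeasure (s : Set ℝ) : SFinite (uniformMeasure s) := by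
  unfold uniformMeasure
  infer_instance

lemma uniformMeasure_Ioo_zero_pi_setOf_lt_cos (u : ℝ) :
    uniformMeasure (Ioo 0 π) {θ | u < cos θ} = ENNReal.ofReal (arccos u / π) := by
  rw [uniformMeasure, Measure.smul_apply, Measure.restrict_apply' measurableSet_Ioo,
    setOf_lt_cos_inter_Ioo_eq_Ioo_arccos, volume_Ioo, volume_Ioo, sub_zero, sub_zero,
    smul_eq_mul, ENNReal.ofReal_div_of_pos pi_pos, ENNReal.div_eq_inv_mul]

lemma sqrt_law_of_cosines_lt_iff {a x r θ : ℝ} (ha : 0 < a) (hx : 0 < x) (hr : 0 < r) :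
    √(x ^ 2 + a ^ 2 - 2 * x * a * cos θ) < r ↔ (x ^ 2 + a ^ 2 - r ^ 2) / (2 * a * x) < cos θ := by
  rw [sqrt_lt' hr, div_lt_iff₀ (by positivity)]
  constructor <;> intro h <;> nlinarith

lemma arccos_law_of_cosines_eq_zero {a x r : ℝ} (ha : 0 < a) (hx : 0 < x)
    (h : r ^ 2 ≤ (x - a) ^ 2) : arccos ((x ^ 2 + a ^ 2 - r ^ 2) / (2 * a * x)) = 0 := by
  rw [arccos_eq_zero, le_div_iff₀ (by positivity)]
  nlinarith

section fac

variable {t lam c : ℝ}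

lemma fac_nonneg (hl : 0 ≤ lam) (hc : 0 ≤ c) (z : ℝ) : 0 ≤ fac t lam c z := by
  unfold fac
  split_ifs with h
  · have := h.1
    positivity
  · exact le_rfl

lemma fac_of_mem_Ioo {z : ℝ} (hz : z ∈ Ioo 0 (c * t)) :
    fac t lam c z =
      lam / c * z / √(c ^ 2 * t ^ 2 - z ^ 2) *
        exp (-(lam * t) + lam / c * √(c ^ 2 * t ^ 2 - z ^ 2)) :=
  if_pos hz

lemma fac_of_notMem_Ioo {z : ℝ} (hz : z ∉ Ioo 0 (c * t)) : fac t lam c z = 0 :=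
  if_neg hz

@[fun_prop]
lemma measurable_fac : Measurable (fac t lam c) :=
  Measurable.ite (measurableSet_Ioo (a := 0) (b := c * t)) (by fun_prop) measurable_const

lemma hasDerivAt_neg_exp_sqrt_eq_fac {x : ℝ} (hx : x ∈ Ioo 0 (c * t)) :
    HasDerivAt (fun x ↦ -exp (-(lam * t) + lam / c * √(c ^ 2 * t ^ 2 - x ^ 2)))
      (fac t lam c x) x := by
  have hv : 0 < c ^ 2 * t ^ 2 - x ^ 2 := by nlinarith [hx.1, hx.2]
  have hs : √(c ^ 2 * t ^ 2 - x ^ 2) ≠ 0 := (sqrt_pos.mpr hv).ne'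
  have hsub : HasDerivAt (fun x : ℝ ↦ c ^ 2 * t ^ 2 - x ^ 2) (-(2 * x)) x := by
    simpa using (hasDerivAt_pow 2 x).const_sub (c ^ 2 * t ^ 2)
  refine (((hsub.sqrt hv.ne').const_mul (lam / c)).const_add (-(lam * t))).exp.neg.congr_deriv ?_
  rw [fac_of_mem_Ioo hx]
  field_simp

lemma integrable_fac (hl : 0 ≤ lam) (hc : 0 ≤ c) : Integrable (fac t lam c) := by
  have hIoc : IntegrableOn (fac t lam c) (Ioc 0 (c * t)) :=
    intervalIntegral.integrableOn_deriv_of_nonneg (by fun_prop)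
      (fun x hx ↦ hasDerivAt_neg_exp_sqrt_eq_fac hx) (fun x _ ↦ fac_nonneg hl hc x)
  exact hIoc.integrable_of_forall_notMem_eq_zero fun x hx ↦
    fac_of_notMem_Ioo fun h ↦ hx (Ioo_subset_Ioc_self h)

end fac

lemma flightLaw_singleton (t lam c : ℝ) :
    flightLaw t lam c {c * t} = ENNReal.ofReal (exp (-(lam * t))) := by
  simp [flightLaw, withDensity_apply _ (measurableSet_singleton _)]

lemma lintegral_flightLaw_of_eq_zero {t lam c : ℝ} {g : ℝ → ENNReal} (hg : Measurable g)
    (h : g (c * t) = 0) :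
    ∫⁻ x, g x ∂flightLaw t lam c = ∫⁻ x, ENNReal.ofReal (fac t lam c x) * g x := by
  rw [flightLaw, lintegral_add_measure, lintegral_smul_measure, lintegral_dirac' _ hg, h,
    smul_zero, zero_add, lintegral_withDensity_eq_lintegral_mul _ measurable_fac.ennreal_ofReal hg]
  rfl

lemma measurableSet_law_of_cosines_lt (a r b : ℝ) :
    MeasurableSet {p : ℝ × ℝ | √(p.1 ^ 2 + a ^ 2 - 2 * p.1 * a * cos p.2) < r ∧ p.1 < b} :=
  (measurableSet_lt (f := fun p : ℝ × ℝ ↦ √(p.1 ^ 2 + a ^ 2 - 2 * p.1 * a * cos p.2))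
    (by fun_prop) measurable_const).inter (measurableSet_lt measurable_fst measurable_const)

lemma flightLaw_prod_uniformMeasure_law_of_cosines_lt {t lam c a r : ℝ} (hl : 0 ≤ lam)
    (hc : 0 ≤ c) (ha : 0 < a) (hr : 0 < r) :
    (flightLaw t lam c).prod (uniformMeasure (Ioo 0 π))
        {p | √(p.1 ^ 2 + a ^ 2 - 2 * p.1 * a * cos p.2) < r ∧ p.1 < c * t}
      = ENNReal.ofReal
          (∫ x, fac t lam c x * (arccos ((x ^ 2 + a ^ 2 - r ^ 2) / (2 * a * x)) / π)) := by
  set S : Set (ℝ × ℝ) := {p | √(p.1 ^ 2 + a ^ 2 - 2 * p.1 * a * cos p.2) < r ∧ p.1 < c * t}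
  have hS : MeasurableSet S := measurableSet_law_of_cosines_lt a r (c * t)
  have hsection {x : ℝ} (hx : x ∈ Ioo 0 (c * t)) :
      Prod.mk x ⁻¹' S = {θ | (x ^ 2 + a ^ 2 - r ^ 2) / (2 * a * x) < cos θ} := by
    ext θ
    simp only [S, mem_preimage, mem_ofPred_eq, hx.2, and_true]
    exact sqrt_law_of_cosines_lt_iff ha hx.1 hr
  have hnonneg (x : ℝ) :
      0 ≤ fac t lam c x * (arccos ((x ^ 2 + a ^ 2 - r ^ 2) / (2 * a * x)) / π) :=
    mul_nonneg (fac_nonneg hl hc x) (div_nonneg (arccos_nonneg _) pi_pos.le)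
  have hbound (x : ℝ) :
      ‖fac t lam c x * (arccos ((x ^ 2 + a ^ 2 - r ^ 2) / (2 * a * x)) / π)‖ ≤ fac t lam c x := by
    rw [norm_of_nonneg (hnonneg x)]
    exact mul_le_of_le_one_right (fac_nonneg hl hc x) (div_le_one_of_le₀ (arccos_le_pi _) pi_pos.le)
  rw [Measure.prod_apply hS, lintegral_flightLaw_of_eq_zero (measurable_measure_prodMk_left hS)
      (by simp [S]),
    ofReal_integral_eq_lintegral_ofReal
      ((integrable_fac hl hc).mono' (by fun_prop) (ae_of_all _ hbound))
      (ae_of_all _ hnonneg)]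
  refine lintegral_congr fun x ↦ ?_
  by_cases hx : x ∈ Ioo 0 (c * t)
  · rw [hsection hx, uniformMeasure_Ioo_zero_pi_setOf_lt_cos,
      ENNReal.ofReal_mul (fac_nonneg hl hc x)]
  · simp [fac_of_notMem_Ioo hx]

lemma integral_fac_mul_arccos_law_of_cosines {t lam c a r : ℝ} (ha : 0 < a) (hr0 : 0 ≤ r)
    (hra : r ≤ a) (hac : a ≤ c * t) :
    ∫ x, fac t lam c x * (arccos ((x ^ 2 + a ^ 2 - r ^ 2) / (2 * a * x)) / π)
      = lam * exp (-(lam * t)) / (π * c) *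
          ∫ ξ in (a - r)..(min (a + r) (c * t)),
            arccos ((ξ ^ 2 + a ^ 2 - r ^ 2) / (2 * a * ξ)) * (ξ / √(c ^ 2 * t ^ 2 - ξ ^ 2)) *
              exp (lam / c * √(c ^ 2 * t ^ 2 - ξ ^ 2)) := by
  have hvanish (x : ℝ) (hx : x ∉ Ioo (a - r) (min (a + r) (c * t))) :
      fac t lam c x * (arccos ((x ^ 2 + a ^ 2 - r ^ 2) / (2 * a * x)) / π) = 0 := by
    by_cases hx' : x ∈ Ioo 0 (c * t)
    · have hdist : r ^ 2 ≤ (x - a) ^ 2 := by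
        simp only [mem_Ioo, lt_min_iff, not_and_or, not_lt] at hx hx'
        rcases hx with hx | hx | hx <;> nlinarith
      rw [arccos_law_of_cosines_eq_zero ha hx'.1 hdist, zero_div, mul_zero]
    · rw [fac_of_notMem_Ioo hx', zero_mul]
  rw [← setIntegral_eq_integral_of_forall_compl_eq_zero hvanish,
    intervalIntegral.integral_of_le (le_min (by linarith) (by linarith)),
    integral_Ioc_eq_integral_Ioo, ← integral_const_mul]
  refine setIntegral_congr_fun measurableSet_Ioo fun x hx ↦ ?_
  have hx' : x ∈ Ioo 0 (c * t) := ⟨by linarith [hx.1], hx.2.trans_le (min_le_right _ _)⟩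
  rw [fac_of_mem_Ioo hx', exp_add]
  ring

lemma measure_prodMk_preimage_inter_preimage {Ω β : Type*} [MeasurableSpace Ω] [MeasurableSpace β]
    {P : Measure Ω} [IsFiniteMeasure P] {X Y Z : Ω → β} (hX : Measurable X)
    (hY : Measurable Y) (hZ : Measurable Z) (hind : iIndepFun ![X, Y, Z] P)
    {S : Set (β × β)} (hS : MeasurableSet S) {T : Set β} (hT : MeasurableSet T) :
    P ((fun ω ↦ (X ω, Z ω)) ⁻¹' S ∩ Y ⁻¹' T) = (P.map X).prod (P.map Z) S * P.map Y T := by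
  have hmeas : ∀ i, Measurable (![X, Y, Z] i) := by
    intro i
    fin_cases i <;> assumption
  have hXZ_Y : IndepFun (fun ω ↦ (X ω, Z ω)) Y P := by
    simpa using hind.indepFun_prodMk hmeas 0 2 1 (by decide) (by decide)
  have hX_Z : IndepFun X Z P := by
    simpa using hind.indepFun (show (0 : Fin 3) ≠ 2 by decide)
  rw [hXZ_Y.measure_inter_preimage_eq_mul S T hS hT, Measure.map_apply hY hT,
    ← (indepFun_iff_map_prod_eq_prod_map_map hX.aemeasurable hZ.aemeasurable).mp hX_Z,
    Measure.map_apply (hX.prodMk hZ) hS]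

theorem joint_prob_first_switched_small_r_general {Ω : Type*} [MeasureSpace Ω] [IsProbabilityMeasure (ℙ : Measure Ω)]
    (t l1 l2 c1 c2 : ℝ) (ht : 0 < t) (hl1 : 0 < l1)
    (hc2 : 0 < c2) (hc12 : c2 ≤ c1)
    (R1 R2 Θ : Ω → ℝ) (hmR1 : Measurable R1) (hmR2 : Measurable R2) (hmΘ : Measurable Θ)
    (hind : iIndepFun ![R1, R2, Θ] ℙ)
    (hR1 : Measure.map R1 ℙ = flightLaw t l1 c1)
    (hR2 : Measure.map R2 ℙ = flightLaw t l2 c2)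
    (hΘ : Measure.map Θ ℙ = uniformMeasure (Set.Ioo 0 Real.pi))
    (r : ℝ) (hr0 : 0 < r) (hr : r ≤ c2 * t) :
    ℙ {ω | rho R1 R2 Θ ω < r ∧ R1 ω < c1 * t ∧ R2 ω = c2 * t}
      = ENNReal.ofReal (l1 * Real.exp (-((l1 + l2) * t)) / (Real.pi * c1) *
          (∫ ξ in (c2 * t - r)..(min (c2 * t + r) (c1 * t)),
              Real.arccos ((ξ ^ 2 + (c2 * t) ^ 2 - r ^ 2) / (2 * (c2 * t) * ξ)) *
                (ξ / Real.sqrt (c1 ^ 2 * t ^ 2 - ξ ^ 2)) *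
                Real.exp ((l1 / c1) * Real.sqrt (c1 ^ 2 * t ^ 2 - ξ ^ 2)))) := by
  have hc1 : 0 < c1 := hc2.trans_le hc12
  set S : Set (ℝ × ℝ) :=
    {p | √(p.1 ^ 2 + (c2 * t) ^ 2 - 2 * p.1 * (c2 * t) * cos p.2) < r ∧ p.1 < c1 * t}
  have hevent : {ω | rho R1 R2 Θ ω < r ∧ R1 ω < c1 * t ∧ R2 ω = c2 * t}
      = (fun ω ↦ (R1 ω, Θ ω)) ⁻¹' S ∩ R2 ⁻¹' {c2 * t} := by
    ext ω
    simp only [rho, S, mem_ofPred_eq, mem_inter_iff, mem_preimage, mem_singleton_iff]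
    constructor
    · rintro ⟨hρ, h1, h2⟩
      exact ⟨⟨h2 ▸ hρ, h1⟩, h2⟩
    · rintro ⟨⟨hρ, h1⟩, h2⟩
      exact ⟨h2 ▸ hρ, h1, h2⟩
  rw [hevent, measure_prodMk_preimage_inter_preimage hmR1 hmR2 hmΘ hind
      (measurableSet_law_of_cosines_lt _ r _) (measurableSet_singleton _),
    hR1, hR2, hΘ, flightLaw_prod_uniformMeasure_law_of_cosines_lt hl1.le hc1.le (by positivity) hr0,
    flightLaw_singleton, ← ENNReal.ofReal_mul' (exp_nonneg _),
    integral_fac_mul_arccos_law_of_cosines (by positivity) hr0.le hr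
      (mul_le_mul_of_nonneg_right hc12 ht.le)]
  congr 1
  rw [show -((l1 + l2) * t) = -(l1 * t) + -(l2 * t) by ring, exp_add]
  ring

theorem joint_prob_first_switched_small_r {Ω : Type*} [MeasureSpace Ω] [IsProbabilityMeasure (ℙ : Measure Ω)]
    (t l1 l2 c1 c2 : ℝ) (ht : 0 < t) (hl1 : 0 < l1) (hl2 : 0 < l2)
    (hc2 : 0 < c2) (hc12 : c2 ≤ c1)
    (R1 R2 Θ : Ω → ℝ) (hmR1 : Measurable R1) (hmR2 : Measurable R2) (hmΘ : Measurable Θ)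
    (hind : iIndepFun ![R1, R2, Θ] ℙ)
    (hR1 : Measure.map R1 ℙ = flightLaw t l1 c1)
    (hR2 : Measure.map R2 ℙ = flightLaw t l2 c2)
    (hΘ : Measure.map Θ ℙ = uniformMeasure (Set.Ioo 0 Real.pi))
    (r : ℝ) (hr0 : 0 < r) (hr : r ≤ c2 * t) :
    ℙ {ω | rho R1 R2 Θ ω < r ∧ R1 ω < c1 * t ∧ R2 ω = c2 * t}
      = ENNReal.ofReal (l1 * Real.exp (-((l1 + l2) * t)) / (Real.pi * c1) *
          (∫ ξ in (c2 * t - r)..(min (c2 * t + r) (c1 * t)),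
              Real.arccos ((ξ ^ 2 + (c2 * t) ^ 2 - r ^ 2) / (2 * (c2 * t) * ξ)) *
                (ξ / Real.sqrt (c1 ^ 2 * t ^ 2 - ξ ^ 2)) *
                Real.exp ((l1 / c1) * Real.sqrt (c1 ^ 2 * t ^ 2 - ξ ^ 2)))) :=
  joint_prob_first_switched_small_r_general t l1 l2 c1 c2 ht hl1 hc2 hc12 R1 R2 Θ hmR1 hmR2 hmΘ hind
    hR1 hR2 hΘ r hr0 hr
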